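/- For a C¹ linear transport along a path with matrix H in a given frame, the following are equivalent: (a) H(t,s) = 1 for all s,t ∈ J; (b) the coefficient matrix Γ(s) := ∂H(s,t)/∂t|_{t=s} vanishes for all s ∈ J; (c) the induced derivation acts on every C¹ section componentwise as (Dσ)^i(s) = dσ^i(s)/ds. -/

import Mathlib

/-!
By the cocycle identity, `H s u = H s t * H t u` for `u` near `t`, so differentiating in `u`
at `t` gives `∂H(s,t)/∂t = H s t * Γ t`. Hence `Γ ≡ 0` makes `u ↦ H s u` locally constant, so
constant on the interval `J` and equal to `H s s = 1`; conversely `H ≡ 1` forces `Γ = 0`.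
By the product rule the difference quotient defining `D` tends to `σ' + Γ σ`, so `D` is the
plain derivative on all sections iff `Γ v = 0` for every constant section `v`.
-/

noncomputable local instance {n : ℕ} : NormedAddCommGroup (Matrix (Fin n) (Fin n) ℝ) :=
  Matrix.normedAddCommGroup
noncomputable local instance {n : ℕ} : NormedSpace ℝ (Matrix (Fin n) (Fin n) ℝ) :=
  Matrix.normedSpace

open Filter Topology Matrix

section MatrixCalculus

variable {n : ℕ} {x : ℝ}

theorem HasDerivAt.matrix_mul {A B : ℝ → Matrix (Fin n) (Fin n) ℝ}
    {A' B' : Matrix (Fin n) (Fin n) ℝ}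
    (hA : HasDerivAt A A' x) (hB : HasDerivAt B B' x) :
    HasDerivAt (fun y => A y * B y) (A x * B' + A' * B x) x :=
  (LinearMap.mul ℝ (Matrix (Fin n) (Fin n) ℝ)).toContinuousBilinearMap.hasDerivAt_of_bilinear
    (fun _ => hA) (fun _ => hB)

theorem HasDerivAt.matrix_mulVec {A : ℝ → Matrix (Fin n) (Fin n) ℝ} {v : ℝ → Fin n → ℝ}
    {A' : Matrix (Fin n) (Fin n) ℝ} {v' : Fin n → ℝ}
    (hA : HasDerivAt A A' x) (hv : HasDerivAt v v' x) :
    HasDerivAt (fun y => A y *ᵥ v y) (A x *ᵥ v' + A' *ᵥ v x) x :=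
  (mulVecBilin ℝ ℝ).toContinuousBilinearMap.hasDerivAt_of_bilinear (fun _ => hA) (fun _ => hv)

theorem Matrix.tendsto_slope_mulVec_of_eq_one {A : ℝ → Matrix (Fin n) (Fin n) ℝ} {σ : ℝ → Fin n → ℝ}
    {Γ : Matrix (Fin n) (Fin n) ℝ} {σ' : Fin n → ℝ} (h1 : A x = 1) (hA : HasDerivAt A Γ x)
    (hσ : HasDerivAt σ σ' x) :
    Tendsto (fun ε : ℝ => ε⁻¹ • (A (x + ε) *ᵥ σ (x + ε) - σ x)) (𝓝[≠] 0)
      (𝓝 (σ' + Γ *ᵥ σ x)) := by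
  have hprod := (hA.matrix_mulVec hσ).tendsto_slope_zero
  simpa only [h1, one_mulVec] using hprod

end MatrixCalculus

section Transport

variable {J : Set ℝ} {n : ℕ} {H G : ℝ → ℝ → Matrix (Fin n) (Fin n) ℝ}

theorem partialDeriv_eq_mul_coeff (hJo : IsOpen J)
    (hco : ∀ r ∈ J, ∀ s ∈ J, ∀ t ∈ J, H r t * H t s = H r s)
    (hd2 : ∀ s ∈ J, ∀ t ∈ J, HasDerivAt (fun u => H s u) (G s t) t)
    {s t : ℝ} (hs : s ∈ J) (ht : t ∈ J) : G s t = H s t * G t t := by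
  have hprod : HasDerivAt (fun u => H s t * H t u) (H s t * G t t) t := by
    simpa using (hasDerivAt_const t (H s t)).matrix_mul (hd2 t ht t ht)
  refine (hd2 s hs t ht).unique (hprod.congr_of_eventuallyEq ?_)
  filter_upwards [hJo.mem_nhds ht] with u hu
  exact (hco s hs u hu t ht).symm

theorem transport_eq_one_of_coeff_eq_zero (hJo : IsOpen J) (hJc : J.OrdConnected)
    (hco : ∀ r ∈ J, ∀ s ∈ J, ∀ t ∈ J, H r t * H t s = H r s)
    (hid : ∀ s ∈ J, H s s = 1)
    (hd2 : ∀ s ∈ J, ∀ t ∈ J, HasDerivAt (fun u => H s u) (G s t) t)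
    (hΓ : ∀ s ∈ J, G s s = 0) {s t : ℝ} (hs : s ∈ J) (ht : t ∈ J) : H s t = 1 := by
  have hderiv : J.EqOn (deriv fun u => H s u) 0 := fun u hu => by
    refine (hd2 s hs u hu).deriv.trans ?_
    rw [partialDeriv_eq_mul_coeff hJo hco hd2 hs hu, hΓ u hu, mul_zero, Pi.zero_apply]
  calc H s t = H s s := hJo.is_const_of_deriv_eq_zero hJc.isPreconnected
        (fun u hu => (hd2 s hs u hu).differentiableAt.differentiableWithinAt) hderiv ht hs
    _ = 1 := hid s hs

theorem coeff_eq_zero_of_transport_eq_one (hJo : IsOpen J)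
    (hd2 : ∀ s ∈ J, ∀ t ∈ J, HasDerivAt (fun u => H s u) (G s t) t)
    {s : ℝ} (hs : s ∈ J) (h : ∀ t ∈ J, H s t = 1) : G s s = 0 := by
  refine (hd2 s hs s hs).unique ((hasDerivAt_const s 1).congr_of_eventuallyEq ?_)
  filter_upwards [hJo.mem_nhds hs] with t ht
  exact h t ht

end Transport

theorem stmt_19_general (J : Set ℝ) (hJo : IsOpen J) (hJc : J.OrdConnected)
    (n : ℕ)
    (H G : ℝ → ℝ → Matrix (Fin n) (Fin n) ℝ)
    (hco : ∀ r ∈ J, ∀ s ∈ J, ∀ t ∈ J, H r t * H t s = H r s)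
    (hid : ∀ s ∈ J, H s s = 1)
    (hd2 : ∀ s ∈ J, ∀ t ∈ J, HasDerivAt (fun u => H s u) (G s t) t) :
    ((∀ s ∈ J, ∀ t ∈ J, H t s = 1) ↔ (∀ s ∈ J, G s s = 0)) ∧
    ((∀ s ∈ J, G s s = 0) ↔
      (∀ σ σ' : ℝ → (Fin n → ℝ), (∀ s ∈ J, HasDerivAt σ (σ' s) s) →
        ∀ s ∈ J, Filter.Tendsto
          (fun ε : ℝ => ε⁻¹ • ((H s (s + ε)).mulVec (σ (s + ε)) - σ s))
          (nhdsWithin 0 {0}ᶜ) (nhds (σ' s)))) := by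
  refine ⟨⟨fun h s hs => coeff_eq_zero_of_transport_eq_one hJo hd2 hs fun t ht => h t ht s hs,
    fun hΓ s hs t ht => transport_eq_one_of_coeff_eq_zero hJo hJc hco hid hd2 hΓ ht hs⟩, ?_, ?_⟩
  · intro hΓ σ σ' hσ s hs
    simpa [hΓ s hs] using
      Matrix.tendsto_slope_mulVec_of_eq_one (hid s hs) (hd2 s hs s hs) (hσ s hs)
  · intro hD s hs
    refine Matrix.ext_iff_mulVec.mpr fun v => ?_
    have hlim := Matrix.tendsto_slope_mulVec_of_eq_one (σ := fun _ => v) (hid s hs)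
      (hd2 s hs s hs) (hasDerivAt_const s v)
    simpa using tendsto_nhds_unique hlim (hD _ _ (fun u _ => hasDerivAt_const u v) s hs)

/-- For a C¹ linear transport with matrix `H` (C¹ in its second argument, with partial
derivative `G`, coefficients `Γ s := G s s`), the following are equivalent in the given
frame: (a) `H t s = 1` for all `s, t ∈ J`; (b) the coefficients `Γ s` vanish on `J`;
(c) the induced derivation acts on every C¹ section as the plain componentwise derivative,
i.e. `(Dσ)(s) = σ'(s)`. -/
theorem stmt_19 (J : Set ℝ) (hJo : IsOpen J) (hJ : J.Nonempty) (hJc : J.OrdConnected)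
    (n : ℕ)
    (H G : ℝ → ℝ → Matrix (Fin n) (Fin n) ℝ)
    (hco : ∀ r ∈ J, ∀ s ∈ J, ∀ t ∈ J, H r t * H t s = H r s)
    (hid : ∀ s ∈ J, H s s = 1)
    (hd2 : ∀ s ∈ J, ∀ t ∈ J, HasDerivAt (fun u => H s u) (G s t) t) :
    ((∀ s ∈ J, ∀ t ∈ J, H t s = 1) ↔ (∀ s ∈ J, G s s = 0)) ∧
    ((∀ s ∈ J, G s s = 0) ↔
      (∀ σ σ' : ℝ → (Fin n → ℝ), (∀ s ∈ J, HasDerivAt σ (σ' s) s) →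
        ∀ s ∈ J, Filter.Tendsto
          (fun ε : ℝ => ε⁻¹ • ((H s (s + ε)).mulVec (σ (s + ε)) - σ s))
          (nhdsWithin 0 {0}ᶜ) (nhds (σ' s)))) :=
  stmt_19_general J hJo hJc n H G hco hid hd2
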